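/- Let R• be a ℤ_{≤0}-graded complex with differential d₀ whose cohomology vanishes outside degree 0. Let d_ℏ = d₀ + ℏd₁ + ℏ²d₂ + ... (possibly infinite sum) be a degree +1 ℂ[[ℏ]]-linear differential on R• ⊗ ℂ[[ℏ]] with d_ℏ² = 0. Then the cohomology of (R•⊗ℂ[[ℏ]], d_ℏ) is concentrated in degree 0, and its associated graded with respect to the ℏ-adic filtration satisfies F_i H⁰/F_{i+1}H⁰ ≅ ℏⁱ H⁰(R•, d₀). -/
import Mathlib


/- STATEMENT 10 (semicontinuity lemma, power series case): let `R•` be a `ℤ_{≤0}`-graded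
complex of `ℂ`-vector spaces (`M n` = component in degree `-n`) with differential
`d₀ : M (n+1) → M n` whose cohomology vanishes outside degree 0.  Let
`d_ℏ = d₀ + ℏd₁ + ℏ²d₂ + …` (possibly an infinite sum) be a degree `+1`
`ℂ[[ℏ]]`-linear differential on `R• ⊗ ℂ[[ℏ]]` with `d_ℏ² = 0`.  Elements of degree
`-n` are encoded as arbitrary sequences `p : ℕ → M n` (`p = Σ_k ℏᵏ p_k`), with
`ℏⁱ R_{[[ℏ]]} = {p | p j = 0 for j < i}`.  Then the cohomology of
`(R•⊗ℂ[[ℏ]], d_ℏ)` is concentrated in degree 0, and the associated graded of `H⁰`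
for the `ℏ`-adic filtration satisfies `F_i H⁰/F_{i+1}H⁰ ≅ ℏⁱ H⁰(R•, d₀)` (stated
elementwise via the leading-coefficient map `p ↦ p i`). -/

noncomputable section

variable (M : ℕ → Type) [∀ n, AddCommGroup (M n)] [∀ n, Module ℂ (M n)]
variable (D : ℕ → ∀ n : ℕ, M (n + 1) →ₗ[ℂ] M n)

/-- The total differential `d_ℏ = Σ_j ℏʲ dⱼ` on power series in `ℏ`:
`(d_ℏ p)_k = Σ_{j≤k} dⱼ (p_{k-j})`. -/
def dhps (n : ℕ) : (ℕ → M (n + 1)) →ₗ[ℂ] (ℕ → M n) :=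
  LinearMap.pi (fun k =>
    ∑ j ∈ Finset.range (k + 1), (D j n) ∘ₗ (LinearMap.proj (k - j)))

lemma dhps_apply (n : ℕ) (p : ℕ → M (n + 1)) (k : ℕ) :
    dhps M D n p k = ∑ j ∈ Finset.range (k + 1), D j n (p (k - j)) := by
  simp [dhps, LinearMap.pi_apply, LinearMap.sum_apply]

open Classical in
/-- preimage chooser -/
def hchoice (n : ℕ) (x : M (n + 1)) : M (n + 2) :=
  if h : ∃ v : M (n + 2), D 0 (n + 1) v = x then h.choose else 0

/-- next coefficient chooser -/
def stepc (n : ℕ) (p : ℕ → M (n + 1)) (f : ℕ → M (n + 2)) (K : ℕ) : M (n + 2) :=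
  hchoice M D n (p K - ∑ b ∈ Finset.range K, D (b + 1) (n + 1) (f (K - (b + 1))))

def FF (n : ℕ) (p : ℕ → M (n + 1)) : ℕ → ℕ → M (n + 2)
  | 0 => fun m => if m = 0 then stepc M D n p (fun _ => 0) 0 else 0
  | (k + 1) => Function.update (FF n p k) (k + 1) (stepc M D n p (FF n p k) (k + 1))

def sfun (n : ℕ) (p : ℕ → M (n + 1)) (m : ℕ) : M (n + 2) := FF M D n p m m

lemma FF_stable (n : ℕ) (p : ℕ → M (n + 1)) :
    ∀ k m, m ≤ k → FF M D n p k m = sfun M D n p m := by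
  intro k
  induction k with
  | zero => intro m hm; interval_cases m; rfl
  | succ k ih =>
    intro m hm
    rcases Nat.lt_succ_iff_lt_or_eq.mp (Nat.lt_succ_of_le hm) with h | h
    · have hne : m ≠ k + 1 := by omega
      show Function.update (FF M D n p k) (k + 1) _ m = _
      rw [Function.update_of_ne hne]
      exact ih m (by omega)
    · subst h; rfl

lemma stepc_congr (n : ℕ) (p : ℕ → M (n + 1)) (K : ℕ) {f g : ℕ → M (n + 2)}
    (h : ∀ m, m < K → f m = g m) : stepc M D n p f K = stepc M D n p g K := by
  have hsum : ∑ b ∈ Finset.range K, D (b + 1) (n + 1) (f (K - (b + 1)))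
      = ∑ b ∈ Finset.range K, D (b + 1) (n + 1) (g (K - (b + 1))) := by
    refine Finset.sum_congr rfl fun b hb => ?_
    rw [h (K - (b + 1)) (by simp only [Finset.mem_range] at hb; omega)]
  simp only [stepc, hsum]

lemma sfun_eq (n : ℕ) (p : ℕ → M (n + 1)) (K : ℕ) :
    sfun M D n p K = stepc M D n p (sfun M D n p) K := by
  cases K with
  | zero =>
    show FF M D n p 0 0 = _
    rw [show FF M D n p 0 0 = stepc M D n p (fun _ => 0) 0 from rfl]
    exact stepc_congr M D n p 0 (fun m hm => absurd hm (Nat.not_lt_zero m))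
  | succ k =>
    show FF M D n p (k + 1) (k + 1) = _
    rw [show FF M D n p (k + 1) (k + 1)
        = stepc M D n p (FF M D n p k) (k + 1) from Function.update_self _ _ _]
    exact stepc_congr M D n p (k + 1) (fun m hm => FF_stable M D n p k m (by omega))

lemma keyC
    (hsq : ∀ (k n : ℕ),
      ∑ i ∈ Finset.range (k + 1), (D i n) ∘ₗ (D (k - i) (n + 1)) = 0)
    (n K : ℕ) (p : ℕ → M (n + 1)) (s : ℕ → M (n + 2))
    (hs : ∀ m, m < K → ∑ j ∈ Finset.range (m + 1), D j (n + 1) (s (m - j)) = p m) :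
    ∑ a ∈ Finset.range K, D (a + 1) n (p (K - (a + 1)))
      + D 0 n (∑ b ∈ Finset.range K, D (b + 1) (n + 1) (s (K - (b + 1)))) = 0 := by
  have A0 : ∑ j ∈ Finset.range (K + 1), ∑ i ∈ Finset.range (j + 1),
      D i n (D (j - i) (n + 1) (s (K - i - (j - i)))) = 0 := by
    refine Finset.sum_eq_zero fun j hj => ?_
    have h := hsq j n
    have he : ∑ i ∈ Finset.range (j + 1), D i n (D (j - i) (n + 1) (s (K - i - (j - i))))
        = ∑ i ∈ Finset.range (j + 1), (D i n ∘ₗ D (j - i) (n + 1)) (s (K - j)) := by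
      refine Finset.sum_congr rfl fun i hi => ?_
      simp only [Finset.mem_range] at hi
      have : K - i - (j - i) = K - j := by omega
      rw [this]; rfl
    rw [he, ← LinearMap.sum_apply, h, LinearMap.zero_apply]
  rw [Finset.sum_range_diag_flip (K + 1)
    (fun a b => D a n (D b (n + 1) (s (K - a - b))))] at A0
  rw [Finset.sum_range_succ'] at A0
  simp only [Nat.sub_zero] at A0
  have h00 : D 0 n ∘ₗ D 0 (n + 1) = 0 := by simpa using hsq 0 n
  have hG0 : ∑ b ∈ Finset.range (K + 1), D 0 n (D b (n + 1) (s (K - b)))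
      = D 0 n (∑ b ∈ Finset.range K, D (b + 1) (n + 1) (s (K - (b + 1)))) := by
    rw [Finset.sum_range_succ']
    simp only [Nat.sub_zero]
    have hz : D 0 n (D 0 (n + 1) (s K)) = 0 := by
      have := congrArg (fun f => f (s K)) h00
      simpa using this
    rw [hz, add_zero, map_sum]
  have hGa : ∀ a ∈ Finset.range K,
      ∑ b ∈ Finset.range (K + 1 - (a + 1)), D (a + 1) n (D b (n + 1) (s (K - (a + 1) - b)))
        = D (a + 1) n (p (K - (a + 1))) := by
    intro a ha
    simp only [Finset.mem_range] at ha
    rw [← map_sum]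
    congr 1
    have hr : K + 1 - (a + 1) = (K - (a + 1)) + 1 := by omega
    rw [hr]
    exact hs (K - (a + 1)) (by omega)
  rw [hG0, Finset.sum_congr rfl hGa] at A0
  exact A0

lemma mainlem
    (hexact : ∀ (n : ℕ) (x : M (n + 1)), D 0 n x = 0 → ∃ y : M (n + 2), D 0 (n + 1) y = x)
    (hsq : ∀ (k n : ℕ),
      ∑ i ∈ Finset.range (k + 1), (D i n) ∘ₗ (D (k - i) (n + 1)) = 0)
    (n : ℕ) (p : ℕ → M (n + 1)) :
    ∀ K, (∀ m, m ≤ K → dhps M D n p m = 0) →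
      ∑ j ∈ Finset.range (K + 1), D j (n + 1) (sfun M D n p (K - j)) = p K := by
  intro K
  induction K using Nat.strong_induction_on with
  | _ K ih =>
    intro hcl
    have hs : ∀ m, m < K →
        ∑ j ∈ Finset.range (m + 1), D j (n + 1) (sfun M D n p (m - j)) = p m :=
      fun m hm => ih m hm (fun l hl => hcl l (by omega))
    have hC := keyC M D hsq n K p (sfun M D n p) hs
    have hclK : ∑ j ∈ Finset.range (K + 1), D j n (p (K - j)) = 0 := by
      rw [← dhps_apply]; exact hcl K le_rfl
    rw [Finset.sum_range_succ'] at hclK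
    simp only [Nat.sub_zero] at hclK
    have hclosed : D 0 n (p K - ∑ b ∈ Finset.range K, D (b + 1) (n + 1)
        (sfun M D n p (K - (b + 1)))) = 0 := by
      rw [map_sub]
      have e1 : D 0 n (p K)
          = - ∑ a ∈ Finset.range K, D (a + 1) n (p (K - (a + 1))) :=
        eq_neg_of_add_eq_zero_right hclK
      have e2 : D 0 n (∑ b ∈ Finset.range K, D (b + 1) (n + 1) (sfun M D n p (K - (b + 1))))
          = - ∑ a ∈ Finset.range K, D (a + 1) n (p (K - (a + 1))) :=
        eq_neg_of_add_eq_zero_right hC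
      rw [e1, e2, sub_self]
    obtain ⟨v, hv⟩ := hexact n _ hclosed
    have hex : ∃ v : M (n + 2), D 0 (n + 1) v
        = p K - ∑ b ∈ Finset.range K, D (b + 1) (n + 1) (sfun M D n p (K - (b + 1))) := ⟨v, hv⟩
    have hsK : D 0 (n + 1) (sfun M D n p K)
        = p K - ∑ b ∈ Finset.range K, D (b + 1) (n + 1) (sfun M D n p (K - (b + 1))) := by
      rw [sfun_eq, stepc, hchoice, dif_pos hex]
      exact hex.choose_spec
    rw [Finset.sum_range_succ']
    simp only [Nat.sub_zero]
    rw [hsK]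
    abel

theorem stmt10
    -- `d₀` has no cohomology in negative degrees:
    (hexact : ∀ (n : ℕ) (x : M (n + 1)), D 0 n x = 0 → ∃ y : M (n + 2), D 0 (n + 1) y = x)
    -- `d_ℏ² = 0`, componentwise in powers of `ℏ`:
    (hsq : ∀ (k n : ℕ),
      ∑ i ∈ Finset.range (k + 1), (D i n) ∘ₗ (D (k - i) (n + 1)) = 0) :
    -- cohomology of `(R•⊗ℂ[[ℏ]], d_ℏ)` is concentrated in degree 0:
    (∀ (n : ℕ) (p : ℕ → M (n + 1)), dhps M D n p = 0 →
      ∃ q : ℕ → M (n + 2), dhps M D (n + 1) q = p)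
    ∧
    -- `F_i H⁰ / F_{i+1} H⁰ ≅ ℏⁱ H⁰(R•, d₀)` via the leading coefficient `p ↦ p i`:
    (∀ i : ℕ,
      (∀ x : M 0, ∃ p : ℕ → M 0, (∀ j < i, p j = 0) ∧ p i = x) ∧
      (∀ p : ℕ → M 0, (∀ j < i, p j = 0) →
        ((∃ y : M 1, D 0 0 y = p i) ↔
          ∃ (p' : ℕ → M 0) (q : ℕ → M 1),
            (∀ j < i + 1, p' j = 0) ∧ p = p' + dhps M D 0 q))) := by
  constructor
  · intro n p hp
    refine ⟨sfun M D n p, ?_⟩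
    funext K
    rw [dhps_apply]
    exact mainlem M D hexact hsq n p K (fun m _ => congrFun hp m)
  · intro i
    constructor
    · intro x
      exact ⟨fun j => if j = i then x else 0, fun j hj => if_neg (by omega), if_pos rfl⟩
    · intro p hp
      constructor
      · rintro ⟨y, hy⟩
        set q : ℕ → M 1 := fun j => if j = i then y else 0 with hqdef
        have hq : ∀ j, j ≤ i → dhps M D 0 q j = if j = i then D 0 0 y else 0 := by
          intro j hj
          rw [dhps_apply]
          rcases eq_or_lt_of_le hj with h | h
          · subst h
            rw [if_pos rfl]
            refine Finset.sum_eq_single_of_mem 0 (Finset.mem_range.mpr (by omega)) ?_ |>.trans ?_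
            · intro l hl hl0
              simp only [Finset.mem_range] at hl
              have : q (j - l) = 0 := if_neg (by omega)
              rw [this, map_zero]
            · have : q (j - 0) = y := by simp [hqdef]
              rw [this]
          · rw [if_neg (by omega)]
            refine Finset.sum_eq_zero fun l hl => ?_
            simp only [Finset.mem_range] at hl
            have : q (j - l) = 0 := if_neg (by omega)
            rw [this, map_zero]
        refine ⟨p - dhps M D 0 q, q, ?_, ?_⟩
        · intro j hj
          rcases Nat.lt_succ_iff_lt_or_eq.mp hj with h | h
          · have h1 := hp j h
            have h2 := hq j (le_of_lt h)
            rw [if_neg (by omega)] at h2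
            simp [Pi.sub_apply, h1, h2]
          · subst h
            have h2 := hq j le_rfl
            rw [if_pos rfl] at h2
            simp [Pi.sub_apply, h2, hy]
        · funext k
          simp [Pi.sub_apply, Pi.add_apply]
      · rintro ⟨p', q, hp', hpq⟩
        have hq0 : ∀ m, m < i → dhps M D 0 q m = 0 := by
          intro m hm
          have h := congrFun hpq m
          rw [Pi.add_apply, hp m hm, hp' m (by omega), zero_add] at h
          exact h.symm
        have hs : ∀ m, m < i →
            ∑ j ∈ Finset.range (m + 1), D j (0 + 1) (sfun M D 0 q (m - j)) = q m :=
          fun m hm => mainlem M D hexact hsq 0 q m (fun l hl => hq0 l (lt_of_le_of_lt hl hm))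
        have hC := keyC M D hsq 0 i q (sfun M D 0 q) hs
        refine ⟨q i - ∑ b ∈ Finset.range i, D (b + 1) (0 + 1) (sfun M D 0 q (i - (b + 1))), ?_⟩
        have hpi : p i = ∑ j ∈ Finset.range (i + 1), D j 0 (q (i - j)) := by
          have h := congrFun hpq i
          rw [Pi.add_apply, hp' i (by omega), zero_add, dhps_apply] at h
          exact h
        rw [map_sub, hpi, Finset.sum_range_succ']
        simp only [Nat.sub_zero]
        have e2 : D 0 0 (∑ b ∈ Finset.range i, D (b + 1) (0 + 1) (sfun M D 0 q (i - (b + 1))))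
            = - ∑ a ∈ Finset.range i, D (a + 1) 0 (q (i - (a + 1))) :=
          eq_neg_of_add_eq_zero_right hC
        rw [e2]
        abel

end
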